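/- Let N ≥ 5, τ = (N−4)/(N−2), let 0 < a < b and L₀ > 0. There exists a constant C > 0, depending only on N, a, L₀, such that for every integer k ≥ 1, every λ ≥ L₀ k^{(N−2)/(N−4)}, every r ∈ [a,b], every ȳ″ ∈ ℝ^{N−2} and every y ∈ ℝ^N, one has Σ_{j=1}^k (1+λ|y−x_j|)^{−τ} ≤ C. -/

import Mathlib

open Real MeasureTheory Finset

noncomputable section

abbrev E (N : ℕ) := EuclideanSpace ℝ (Fin N)

/-- The standard bubble `w_{x,λ}(y) = (N(N-2))^{(N-2)/4} (λ/(1+λ²|y-x|²))^{(N-2)/2}`. -/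
def bubble (N : ℕ) (x : E N) (l : ℝ) (y : E N) : ℝ :=
  ((N : ℝ) * ((N : ℝ) - 2)) ^ (((N : ℝ) - 2) / 4) *
    (l / (1 + l ^ 2 * ‖y - x‖ ^ 2)) ^ (((N : ℝ) - 2) / 2)

/-- The points on the regular `k`-polygon (0-indexed: `pt N k r y2 j` is `x_{j+1}`). -/
def pt (N k : ℕ) (r : ℝ) (y2 : E (N - 2)) (j : ℕ) : E N :=
  (EuclideanSpace.equiv (Fin N) ℝ).symm fun i =>
    if h0 : (i : ℕ) = 0 then r * Real.cos (2 * Real.pi * j / k)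
    else if h1 : (i : ℕ) = 1 then r * Real.sin (2 * Real.pi * j / k)
    else y2 ⟨(i : ℕ) - 2, by have := i.2; omega⟩

/-- `τ = (N-4)/(N-2)`. -/
def tau (N : ℕ) : ℝ := ((N : ℝ) - 4) / ((N : ℝ) - 2)

/-!
Let `x_{j₀}` be the vertex of the polygon nearest to `y`. The vertex `m` steps further along is at
chord distance `2r sin(π m / k) ≥ 4a min(m, k - m) / k` from `x_{j₀}`, hence at distance at least
half of that from `y`. Since `λ ≥ L₀ k^{1/τ}`, its weight is at most
`(2aL₀)^{-τ} k^{τ-1} min(m, k - m)^{-τ}`, and `∑_{0<m<k} min(m, k - m)^{-τ} ≤ 2 ∑_{0<m<k} m^{-τ}`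
is `O(k^{1-τ})` because `τ < 1`. The nearest vertex itself contributes at most `1`.
-/

theorem sum_range_rpow_neg_le {τ : ℝ} (h0 : 0 ≤ τ) (h1 : τ < 1) (n : ℕ) :
    ∑ m ∈ range n, ((m : ℝ) + 1) ^ (-τ) ≤ (n : ℝ) ^ (1 - τ) / (1 - τ) := by
  induction n with
  | zero => simp [zero_rpow (by linarith : (1 - τ) ≠ 0)]
  | succ n ih =>
    set x : ℝ := (n : ℝ) + 1
    have hx : 0 < x := by positivity
    have hs : -1 ≤ -1 / x := by rw [neg_div, neg_le_neg_iff, div_le_one hx]; simp [x]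
    have hn : (n : ℝ) = x * (1 + -1 / x) := by field_simp; ring
    -- Bernoulli's inequality for the concave power `1 - τ` is the tangent-line bound at `x`.
    have htan : (n : ℝ) ^ (1 - τ) ≤ x ^ (1 - τ) - (1 - τ) * x ^ (-τ) := by
      rw [hn, mul_rpow hx.le (by linarith)]
      calc x ^ (1 - τ) * (1 + -1 / x) ^ (1 - τ) ≤ x ^ (1 - τ) * (1 + (1 - τ) * (-1 / x)) := by
            gcongr; exact rpow_one_add_le_one_add_mul_self hs (by linarith) (by linarith)
        _ = x ^ (1 - τ) - (1 - τ) * x ^ (-τ) := by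
            rw [show -τ = (1 - τ) - 1 by ring, rpow_sub_one hx.ne']; ring
    rw [sum_range_succ, Nat.cast_succ, le_div_iff₀ (by linarith)]
    rw [le_div_iff₀ (by linarith)] at ih
    linarith [show (∑ m ∈ range n, ((m : ℝ) + 1) ^ (-τ) + x ^ (-τ)) * (1 - τ)
      = (∑ m ∈ range n, ((m : ℝ) + 1) ^ (-τ)) * (1 - τ) + (1 - τ) * x ^ (-τ) by ring]

theorem rpow_neg_min_le_add {τ x y : ℝ} (hx : 0 ≤ x) (hy : 0 ≤ y) :
    min x y ^ (-τ) ≤ x ^ (-τ) + y ^ (-τ) := by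
  rcases min_choice x y with h | h <;> rw [h]
  · linarith [rpow_nonneg hy (-τ)]
  · linarith [rpow_nonneg hx (-τ)]

theorem sum_range_sub_eq_sum_range_add_one (f : ℝ → ℝ) (n : ℕ) :
    ∑ m ∈ range n, f ((n : ℝ) - m) = ∑ m ∈ range n, f ((m : ℝ) + 1) := by
  rw [← sum_range_reflect]
  refine sum_congr rfl fun m hm => ?_
  have := mem_range.mp hm
  rw [Nat.cast_sub (by omega), Nat.cast_sub (by omega)]
  push_cast; ring_nf

theorem sum_range_min_rpow_neg_le {τ : ℝ} (h0 : 0 ≤ τ) (h1 : τ < 1) (n : ℕ) :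
    ∑ m ∈ range n, min ((m : ℝ) + 1) ((n : ℝ) - m) ^ (-τ) ≤ 2 * (n : ℝ) ^ (1 - τ) / (1 - τ) := by
  calc ∑ m ∈ range n, min ((m : ℝ) + 1) ((n : ℝ) - m) ^ (-τ)
      ≤ ∑ m ∈ range n, (((m : ℝ) + 1) ^ (-τ) + ((n : ℝ) - m) ^ (-τ)) :=
        sum_le_sum fun m hm => rpow_neg_min_le_add (by positivity)
          (sub_nonneg.mpr (by exact_mod_cast (mem_range.mp hm).le))
    _ = 2 * ∑ m ∈ range n, ((m : ℝ) + 1) ^ (-τ) := by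
        rw [sum_add_distrib, sum_range_sub_eq_sum_range_add_one (· ^ (-τ)), two_mul]
    _ ≤ 2 * (n : ℝ) ^ (1 - τ) / (1 - τ) := by
        rw [mul_div_assoc]; gcongr; exact sum_range_rpow_neg_le h0 h1 n

theorem rpow_sub_one_mul_rpow_one_sub_le_one {τ x y : ℝ} (hτ : τ ≤ 1) (hx : 0 ≤ x) (hy : 0 < y)
    (hxy : x ≤ y) : y ^ (τ - 1) * x ^ (1 - τ) ≤ 1 :=
  calc y ^ (τ - 1) * x ^ (1 - τ) ≤ y ^ (τ - 1) * y ^ (1 - τ) := by gcongr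
    _ = 1 := by rw [← rpow_add hy]; simp

theorem one_add_mul_rpow_neg_le {τ L0 c l t d k : ℝ} (hτ : 0 < τ) (hk : 0 < k) (hL0 : 0 < L0)
    (hc : 0 < c) (hd : 0 < d) (hl : L0 * k ^ (1 / τ) ≤ l) (ht : c * d / k ≤ t) :
    (1 + l * t) ^ (-τ) ≤ (c * L0) ^ (-τ) * k ^ (τ - 1) * d ^ (-τ) := by
  have hX : L0 * k ^ (1 / τ) * (c * d / k) ≤ 1 + l * t :=
    le_add_of_nonneg_of_le zero_le_one
      (mul_le_mul hl ht (by positivity) ((by positivity : (0 : ℝ) ≤ L0 * k ^ (1 / τ)).trans hl))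
  calc (1 + l * t) ^ (-τ) ≤ (L0 * k ^ (1 / τ) * (c * d / k)) ^ (-τ) :=
        rpow_le_rpow_of_nonpos (by positivity) hX (by linarith)
    _ = (c * L0) ^ (-τ) * k ^ (τ - 1) * d ^ (-τ) := by
        rw [show L0 * k ^ (1 / τ) * (c * d / k) = (c * L0) * d * (k ^ (1 / τ) / k) by ring,
          mul_rpow (by positivity) (by positivity), mul_rpow (by positivity) (by positivity),
          div_rpow (by positivity) hk.le, ← rpow_mul hk.le, rpow_neg hk.le τ,
          show 1 / τ * -τ = -1 by field_simp, rpow_neg_one, rpow_sub hk, rpow_one]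
        field_simp

theorem two_div_pi_mul_min_le_sin {x : ℝ} (hx₀ : 0 ≤ x) (hxπ : x ≤ π) :
    2 / π * min x (π - x) ≤ sin x := by
  rcases le_total x (π / 2) with h | h
  · exact (mul_le_mul_of_nonneg_left (min_le_left _ _) (by positivity)).trans (mul_le_sin hx₀ h)
  · rw [← sin_pi_sub]
    exact (mul_le_mul_of_nonneg_left (min_le_right _ _) (by positivity)).trans
      (mul_le_sin (by linarith) (by linarith))

theorem Function.Periodic.sum_range_add {M : Type*} [AddCancelCommMonoid M] {f : ℕ → M} {k : ℕ}
    (hf : Function.Periodic f k) (j : ℕ) : ∑ m ∈ range k, f (j + m) = ∑ m ∈ range k, f m := by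
  induction j with
  | zero => simp
  | succ j ih =>
    rw [← ih, ← add_left_inj (f j)]
    nth_rewrite 2 [← hf j]
    rw [← sum_range_succ (fun m => f (j + m)), sum_range_succ']
    simp only [add_assoc, add_comm 1, add_zero]

theorem pt_periodic (N : ℕ) {k : ℕ} (hk : k ≠ 0) (r : ℝ) (y2 : E (N - 2)) :
    Function.Periodic (pt N k r y2) k := by
  intro j
  have : 2 * π * ((j + k : ℕ) : ℝ) / k = 2 * π * j / k + 2 * π := by
    have : (k : ℝ) ≠ 0 := Nat.cast_ne_zero.mpr hk
    push_cast; field_simp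
  simp only [pt, this, cos_add_two_pi, sin_add_two_pi]

theorem norm_pt_add_sub_pt {N : ℕ} (hN : 2 ≤ N) (k : ℕ) (r : ℝ) (y2 : E (N - 2)) (j m : ℕ) :
    ‖pt N k r y2 (j + m) - pt N k r y2 j‖ = 2 * |r| * |sin (π * m / k)| := by
  obtain ⟨M, rfl⟩ : ∃ M, N = M + 2 := ⟨N - 2, by omega⟩
  set θ := π * m / k
  set u := 2 * π * j / k + θ
  have hA : 2 * π * ((j : ℝ) + m) / k = u + θ := by simp only [u, θ]; ring
  have hB : 2 * π * (j : ℝ) / k = u - θ := by simp only [u]; ring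
  rw [EuclideanSpace.norm_eq, ← sqrt_sq (by positivity : 0 ≤ 2 * |r| * |sin θ|)]
  congr 1
  simp only [pt, Fin.val_eq_zero_iff, Nat.cast_add, hA, cos_add, sin_add,
    PiLp.continuousLinearEquiv_symm_apply, hB, cos_sub, sin_sub, PiLp.sub_apply, norm_eq_abs,
    sq_abs, Fin.sum_univ_succ, ↓reduceDIte, Fin.succ_ne_zero, Fin.val_succ, Nat.add_eq_right,
    Nat.reduceSubDiff, add_tsub_cancel_right, Fin.eta, sub_self, ne_eq, OfNat.ofNat_ne_zero,
    not_false_eq_true, zero_pow, sum_const_zero, add_zero, mul_pow]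
  linear_combination 4 * r ^ 2 * sin θ ^ 2 * sin_sq_add_cos_sq u

theorem exists_forall_norm_sub_pt_le (N : ℕ) {k : ℕ} (hk : k ≠ 0) (r : ℝ) (y2 : E (N - 2))
    (y : E N) : ∃ j₀, ∀ j, ‖y - pt N k r y2 j₀‖ ≤ ‖y - pt N k r y2 j‖ := by
  obtain ⟨j₀, -, hj₀⟩ :=
    exists_min_image (range k) (fun j => ‖y - pt N k r y2 j‖) (nonempty_range_iff.mpr hk)
  exact ⟨j₀, fun j => (pt_periodic N hk r y2).map_mod_nat j ▸
    hj₀ _ (mem_range.mpr (Nat.mod_lt _ (Nat.pos_of_ne_zero hk)))⟩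

theorem le_norm_sub_pt_add {N : ℕ} (hN : 2 ≤ N) {k : ℕ} (hk : k ≠ 0) {a r : ℝ} (ha : 0 ≤ a)
    (har : a ≤ r) (y2 : E (N - 2)) (y : E N) {j₀ : ℕ}
    (hmin : ∀ j, ‖y - pt N k r y2 j₀‖ ≤ ‖y - pt N k r y2 j‖) {m : ℕ} (hm : m ≤ k) :
    2 * a * min (m : ℝ) (k - m) / k ≤ ‖y - pt N k r y2 (j₀ + m)‖ := by
  have hk' : (0 : ℝ) < k := by positivity
  have hm' : (m : ℝ) ≤ k := by exact_mod_cast hm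
  have hθ₀ : 0 ≤ π * m / k := by positivity
  have hθπ : π * m / k ≤ π := by rw [div_le_iff₀ hk']; gcongr
  have hchord : 4 * a * min (m : ℝ) (k - m) / k ≤ ‖pt N k r y2 (j₀ + m) - pt N k r y2 j₀‖ := by
    rw [norm_pt_add_sub_pt hN, abs_of_nonneg (by linarith),
      abs_of_nonneg (sin_nonneg_of_nonneg_of_le_pi hθ₀ hθπ)]
    have hmin_eq : 2 / π * min (π * m / k) (π - π * m / k) = 2 * min (m : ℝ) (k - m) / k := by
      rw [show π - π * m / k = π / k * (k - m) by field_simp, mul_div_right_comm,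
        ← mul_min_of_nonneg _ _ (by positivity)]
      field_simp
    have hsin := hmin_eq ▸ two_div_pi_mul_min_le_sin hθ₀ hθπ
    have hmin_nonneg : 0 ≤ min (m : ℝ) (k - m) := le_min (by positivity) (by linarith)
    calc 4 * a * min (m : ℝ) (k - m) / k = 2 * a * (2 * min (m : ℝ) (k - m) / k) := by ring
      _ ≤ 2 * r * sin (π * m / k) := by gcongr; linarith
  have htri : ‖pt N k r y2 (j₀ + m) - pt N k r y2 j₀‖ ≤ 2 * ‖y - pt N k r y2 (j₀ + m)‖ := by
    calc _ ≤ ‖pt N k r y2 (j₀ + m) - y‖ + ‖y - pt N k r y2 j₀‖ :=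
          norm_sub_le_norm_sub_add_norm_sub _ _ _
      _ ≤ _ := by rw [norm_sub_rev]; linarith [hmin (j₀ + m)]
  linarith [show 4 * a * min (m : ℝ) (k - m) / k = 2 * (2 * a * min (m : ℝ) (k - m) / k) by ring]

theorem rpow_neg_one_add_mul_norm_sub_pt_add_le {N : ℕ} (hN : 2 ≤ N) {k : ℕ}
    {τ a r L0 l : ℝ} (hτ : 0 < τ) (ha : 0 < a) (har : a ≤ r) (hL0 : 0 < L0)
    (hl : L0 * (k : ℝ) ^ (1 / τ) ≤ l) (y2 : E (N - 2)) (y : E N) {j₀ : ℕ}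
    (hmin : ∀ j, ‖y - pt N k r y2 j₀‖ ≤ ‖y - pt N k r y2 j‖) {m : ℕ} (hm₀ : 0 < m) (hmk : m < k) :
    (1 + l * ‖y - pt N k r y2 (j₀ + m)‖) ^ (-τ)
      ≤ (2 * a * L0) ^ (-τ) * (k : ℝ) ^ (τ - 1) * min (m : ℝ) (k - m) ^ (-τ) := by
  have hd : 0 < min (m : ℝ) (k - m) :=
    lt_min (by exact_mod_cast hm₀) (sub_pos.mpr (by exact_mod_cast hmk))
  exact one_add_mul_rpow_neg_le hτ (by exact_mod_cast hm₀.trans hmk) hL0 (by positivity) hd hl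
    (le_norm_sub_pt_add hN (by omega) ha.le har y2 y hmin hmk.le)

theorem weight_sum_tau_bounded_general (N : ℕ) (hN : 5 ≤ N) (a b L0 : ℝ)
    (ha : 0 < a) (hL0 : 0 < L0) :
    ∃ C : ℝ, 0 < C ∧ ∀ k : ℕ, 1 ≤ k →
      ∀ l : ℝ, L0 * (k : ℝ) ^ (((N : ℝ) - 2) / ((N : ℝ) - 4)) ≤ l →
      ∀ r : ℝ, r ∈ Set.Icc a b → ∀ y2 : E (N - 2), ∀ y : E N,
        (∑ j ∈ Finset.range k, (1 + l * ‖y - pt N k r y2 j‖) ^ (-(tau N))) ≤ C := by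
  have hN' : (5 : ℝ) ≤ N := by exact_mod_cast hN
  have hτ₀ : 0 < tau N := div_pos (by linarith) (by linarith)
  have hτ₁ : tau N < 1 := (div_lt_one (by linarith)).mpr (by linarith)
  set c := (2 * a * L0) ^ (-tau N)
  refine ⟨1 + c * (2 / (1 - tau N)), by positivity, fun k hk l hl r hr y2 y => ?_⟩
  rw [← one_div_div, ← tau] at hl
  obtain ⟨n, rfl⟩ : ∃ n, k = n + 1 := ⟨k - 1, by omega⟩
  obtain ⟨j₀, hmin⟩ := exists_forall_norm_sub_pt_le N n.add_one_ne_zero r y2 y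
  set w := fun j => (1 + l * ‖y - pt N (n + 1) r y2 j‖) ^ (-tau N)
  have hw : Function.Periodic w (n + 1) := fun j => by
    simp only [w, pt_periodic N n.add_one_ne_zero r y2 j]
  have hl₀ : 0 ≤ l := (by positivity : (0 : ℝ) ≤ L0 * (n + 1 : ℕ) ^ (1 / tau N)).trans hl
  have hnear : w (j₀ + 0) ≤ 1 :=
    rpow_le_one_of_one_le_of_nonpos (le_add_of_nonneg_right (by positivity)) (by linarith)
  have hfar : ∀ m ∈ range n, w (j₀ + (m + 1))
      ≤ c * (n + 1 : ℕ) ^ (tau N - 1) * min ((m : ℝ) + 1) (n - m) ^ (-tau N) := fun m hm => by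
    have := rpow_neg_one_add_mul_norm_sub_pt_add_le (by omega) hτ₀ ha hr.1 hL0 hl
      y2 y hmin m.succ_pos (Nat.succ_lt_succ (mem_range.mp hm))
    rwa [Nat.cast_succ m, Nat.cast_succ n, add_sub_add_right_eq_sub, ← Nat.cast_succ n] at this
  rw [← hw.sum_range_add j₀, sum_range_succ']
  calc ∑ m ∈ range n, w (j₀ + (m + 1)) + w (j₀ + 0)
      ≤ c * (n + 1 : ℕ) ^ (tau N - 1) * ∑ m ∈ range n, min ((m : ℝ) + 1) (n - m) ^ (-tau N)
          + 1 := by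
        rw [mul_sum]; exact add_le_add (sum_le_sum hfar) hnear
    _ ≤ c * (n + 1 : ℕ) ^ (tau N - 1) * (2 * (n : ℝ) ^ (1 - tau N) / (1 - tau N)) + 1 := by
        gcongr; exact sum_range_min_rpow_neg_le hτ₀.le hτ₁ n
    _ = c * (2 / (1 - tau N)) * ((n + 1 : ℕ) ^ (tau N - 1) * (n : ℝ) ^ (1 - tau N)) + 1 := by ring
    _ ≤ c * (2 / (1 - tau N)) * 1 + 1 := by
        have := sub_pos.mpr hτ₁
        gcongr
        exact rpow_sub_one_mul_rpow_one_sub_le_one hτ₁.le n.cast_nonneg (by positivity)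
          (by exact_mod_cast n.le_succ)
    _ = 1 + c * (2 / (1 - tau N)) := by ring

/-- Uniform boundedness of the weight sum with exponent `τ`. -/
theorem weight_sum_tau_bounded (N : ℕ) (hN : 5 ≤ N) (a b L0 : ℝ)
    (ha : 0 < a) (hab : a < b) (hL0 : 0 < L0) :
    ∃ C : ℝ, 0 < C ∧ ∀ k : ℕ, 1 ≤ k →
      ∀ l : ℝ, L0 * (k : ℝ) ^ (((N : ℝ) - 2) / ((N : ℝ) - 4)) ≤ l →
      ∀ r : ℝ, r ∈ Set.Icc a b → ∀ y2 : E (N - 2), ∀ y : E N,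
        (∑ j ∈ Finset.range k, (1 + l * ‖y - pt N k r y2 j‖) ^ (-(tau N))) ≤ C :=
  weight_sum_tau_bounded_general N hN a b L0 ha hL0
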